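/- arXiv:1102.1053 — 3 statements merged into one kernel-verified Lean document; each statement's English description precedes it below -/
import Mathlib

section
/- Let s and r be positive integers with s ≤ r. Call a pair (x, y) of binary vectors of length r 's-good' if for every h with 1 ≤ h ≤ s there exists a pair of indices (i, j) with 0 ≤ i, j ≤ r − s such that (x_i, …, x_{i+s−1}) = e_h and (x_j, …, x_{j+s−1}) = 0_s, while (y_i, …, y_{i+s−1}) = 0_s and (y_j, …, y_{j+s−1}) = e_h; call it 's-bad' otherwise. Then the number f_s(r) of s-bad pairs of binary vectors of length r satisfies f_s(r) ≤ 2s·4^{s−1}·α_s^r, where α_s = (4^s − 1)^{1/s}. -/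
/-- The length-`s` window of a binary vector `x` of length `r`, starting at position `i`. -/
def window {r : ℕ} (s : ℕ) (x : Fin r → Fin 2) (i : ℕ) (hi : i + s ≤ r) : Fin s → Fin 2 :=
  fun t => x ⟨i + t, by omega⟩

/-- The standard basis vector `e_h` of length `s` (1-indexed position `h`). -/
def eVec (s h : ℕ) : Fin s → Fin 2 :=
  fun t => if (t : ℕ) = h - 1 then 1 else 0

/-- A pair `(x, y)` of binary vectors of length `r` is `s`-good. -/
def sGood (r s : ℕ) (x y : Fin r → Fin 2) : Prop :=
  ∀ h, 1 ≤ h → h ≤ s →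
    ∃ (i j : ℕ) (hi : i + s ≤ r) (hj : j + s ≤ r),
      window s x i hi = eVec s h ∧ window s x j hj = (fun _ => 0) ∧
      window s y i hi = (fun _ => 0) ∧ window s y j hj = eVec s h

def pairAt {r : ℕ} (p : (Fin r → Fin 2) × (Fin r → Fin 2)) (a : ℕ) : Fin 2 × Fin 2 :=
  if h : a < r then (p.1 ⟨a, h⟩, p.2 ⟨a, h⟩) else (0, 0)

lemma count_avoid {r s m t : ℕ} (hr : r = m * s + t) (hs : 0 < s)
    (v : Fin s → Fin 2 × Fin 2) :
    Fintype.card {p : (Fin r → Fin 2) × (Fin r → Fin 2) //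
        ∀ k, k < m → (fun u : Fin s => pairAt p (k * s + u)) ≠ v}
      ≤ (4 ^ s - 1) ^ m * 4 ^ t := by
  classical
  have h4 : Fintype.card (Fin 2 × Fin 2) = 4 := by simp
  have h1 : Fintype.card {w : Fin s → Fin 2 × Fin 2 // w ≠ v} = 4 ^ s - 1 := by
    have := Fintype.card_subtype_compl (fun w : Fin s → Fin 2 × Fin 2 => w = v)
    simp only [Fintype.card_subtype_eq] at this
    simpa [Fintype.card_fun, h4] using this
  have htarget : Fintype.card ((Fin m → {w : Fin s → Fin 2 × Fin 2 // w ≠ v})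
      × (Fin t → Fin 2 × Fin 2)) = (4 ^ s - 1) ^ m * 4 ^ t := by
    simp [Fintype.card_fun, h1, h4]
  rw [← htarget]
  set F : {p : (Fin r → Fin 2) × (Fin r → Fin 2) //
        ∀ k, k < m → (fun u : Fin s => pairAt p (k * s + u)) ≠ v} →
      (Fin m → {w : Fin s → Fin 2 × Fin 2 // w ≠ v}) × (Fin t → Fin 2 × Fin 2) :=
    fun p => (fun k => ⟨fun u => pairAt p.1 (k * s + u), p.2 k k.isLt⟩,
               fun u => pairAt p.1 (m * s + u)) with hF
  apply Fintype.card_le_of_injective F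
  rintro ⟨p, hp⟩ ⟨q, hq⟩ h
  simp only [hF, Prod.mk.injEq] at h
  obtain ⟨h1', h2'⟩ := h
  have key : ∀ a : ℕ, a < r → pairAt p a = pairAt q a := by
    intro a ha
    rcases lt_or_ge a (m * s) with hlt | hge
    · have hk : a / s < m := (Nat.div_lt_iff_lt_mul hs).2 hlt
      have hu : a % s < s := Nat.mod_lt _ hs
      have := congrFun h1' ⟨a / s, hk⟩
      have := congrArg Subtype.val this
      have h3 := congrFun this ⟨a % s, hu⟩
      have ha2 : a / s * s + a % s = a := Nat.div_add_mod' a s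
      simpa [ha2] using h3
    · have hu : a - m * s < t := by omega
      have h3 := congrFun h2' ⟨a - m * s, hu⟩
      have : m * s + (a - m * s) = a := by omega
      simpa [this] using h3
  apply Subtype.ext
  have keyp : ∀ a : Fin r, p.1 a = q.1 a ∧ p.2 a = q.2 a := by
    intro a
    have := key a a.isLt
    simp only [pairAt, dif_pos a.isLt, Prod.mk.injEq] at this
    exact this
  exact Prod.ext (funext fun a => (keyp a).1) (funext fun a => (keyp a).2)

open Finset in

theorem number_of_s_bad_pairs_le (s r : ℕ) (hs : 0 < s) (hsr : s ≤ r) :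
    (Nat.card {p : (Fin r → Fin 2) × (Fin r → Fin 2) // ¬ sGood r s p.1 p.2} : ℝ) ≤
      2 * s * 4 ^ (s - 1) * (((4 : ℝ) ^ s - 1) ^ ((1 : ℝ) / s)) ^ r := by
  classical
  set m := r / s with hm
  set t := r % s with htdef
  have hr : r = m * s + t := by
    rw [hm, htdef, mul_comm]
    exact (Nat.div_add_mod r s).symm
  have ht : t < s := Nat.mod_lt _ hs
  set vA : ℕ → Fin s → Fin 2 × Fin 2 := fun h u => (eVec s h u, 0) with hvA
  set vB : ℕ → Fin s → Fin 2 × Fin 2 := fun h u => (0, eVec s h u) with hvB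
  set PA : ℕ → ((Fin r → Fin 2) × (Fin r → Fin 2)) → Prop :=
    fun h p => ∀ k, k < m → (fun u : Fin s => pairAt p (k * s + u)) ≠ vA h with hPA
  set PB : ℕ → ((Fin r → Fin 2) × (Fin r → Fin 2)) → Prop :=
    fun h p => ∀ k, k < m → (fun u : Fin s => pairAt p (k * s + u)) ≠ vB h with hPB
  -- covering
  have cover : ∀ p : (Fin r → Fin 2) × (Fin r → Fin 2), ¬ sGood r s p.1 p.2 →
      ∃ h, h ∈ Finset.Icc 1 s ∧ (PA h p ∨ PB h p) := by
    intro p hbad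
    rw [sGood] at hbad
    push_neg at hbad
    obtain ⟨h, h1, h2, hall⟩ := hbad
    refine ⟨h, Finset.mem_Icc.2 ⟨h1, h2⟩, ?_⟩
    by_cases hA : ∃ i, ∃ hi : i + s ≤ r,
        window s p.1 i hi = eVec s h ∧ window s p.2 i hi = (fun _ => 0)
    · -- then no B-window anywhere, in particular PB h p
      obtain ⟨i, hi, hxA, hyA⟩ := hA
      right
      intro k hk heq
      have hj : k * s + s ≤ r :=
        calc k * s + s = (k + 1) * s := by ring
          _ ≤ m * s := Nat.mul_le_mul_right _ hk
          _ ≤ r := by omega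
      have hx : window s p.1 (k * s) hj = (fun _ => 0) := by
        funext u
        have := congrFun heq u
        simp only [pairAt, dif_pos (show k * s + (u : ℕ) < r by omega), hvB,
          Prod.mk.injEq] at this
        exact this.1
      have hy : window s p.2 (k * s) hj = eVec s h := by
        funext u
        have := congrFun heq u
        simp only [pairAt, dif_pos (show k * s + (u : ℕ) < r by omega), hvB,
          Prod.mk.injEq] at this
        exact this.2
      exact hall i (k * s) hi hj hxA hx hyA hy
    · left
      intro k hk heq
      have hj : k * s + s ≤ r :=
        calc k * s + s = (k + 1) * s := by ring
          _ ≤ m * s := Nat.mul_le_mul_right _ hk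
          _ ≤ r := by omega
      refine hA ⟨k * s, hj, ?_, ?_⟩
      · funext u
        have := congrFun heq u
        simp only [pairAt, dif_pos (show k * s + (u : ℕ) < r by omega), hvA,
          Prod.mk.injEq] at this
        exact this.1
      · funext u
        have := congrFun heq u
        simp only [pairAt, dif_pos (show k * s + (u : ℕ) < r by omega), hvA,
          Prod.mk.injEq] at this
        exact this.2
  -- nat counting
  set N := (4 ^ s - 1) ^ m * 4 ^ t with hN
  have hnat : Nat.card {p : (Fin r → Fin 2) × (Fin r → Fin 2) // ¬ sGood r s p.1 p.2}
      ≤ s * (2 * N) := by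
    rw [Nat.card_eq_fintype_card, Fintype.card_subtype]
    have hsub : (univ.filter (fun p : (Fin r → Fin 2) × (Fin r → Fin 2) =>
        ¬ sGood r s p.1 p.2)) ⊆ (Finset.Icc 1 s).biUnion
          (fun h => univ.filter (PA h) ∪ univ.filter (PB h)) := by
      intro p hp
      simp only [mem_filter, mem_univ, true_and] at hp
      obtain ⟨h, hh, hAB⟩ := cover p hp
      refine Finset.mem_biUnion.2 ⟨h, hh, ?_⟩
      rcases hAB with hA | hB
      · exact Finset.mem_union_left _ (Finset.mem_filter.2 ⟨Finset.mem_univ _, hA⟩)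
      · exact Finset.mem_union_right _ (Finset.mem_filter.2 ⟨Finset.mem_univ _, hB⟩)
    calc (univ.filter (fun p : (Fin r → Fin 2) × (Fin r → Fin 2) =>
        ¬ sGood r s p.1 p.2)).card
        ≤ ((Finset.Icc 1 s).biUnion
          (fun h => univ.filter (PA h) ∪ univ.filter (PB h))).card :=
          Finset.card_le_card hsub
      _ ≤ ∑ h ∈ Finset.Icc 1 s, (univ.filter (PA h) ∪ univ.filter (PB h)).card :=
          Finset.card_biUnion_le
      _ ≤ ∑ h ∈ Finset.Icc 1 s, (2 * N) := by
          apply Finset.sum_le_sum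
          intro h _
          have hA : (univ.filter (PA h)).card ≤ N := by
            rw [← Fintype.card_subtype]
            exact count_avoid hr hs (vA h)
          have hB : (univ.filter (PB h)).card ≤ N := by
            rw [← Fintype.card_subtype]
            exact count_avoid hr hs (vB h)
          calc (univ.filter (PA h) ∪ univ.filter (PB h)).card
              ≤ (univ.filter (PA h)).card + (univ.filter (PB h)).card :=
                Finset.card_union_le _ _
            _ ≤ 2 * N := by omega
      _ = s * (2 * N) := by
          rw [Finset.sum_const, smul_eq_mul, Nat.card_Icc, Nat.add_sub_cancel]
  -- real arithmetic
  set β : ℝ := (4 : ℝ) ^ s - 1 with hβ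
  set α : ℝ := β ^ ((1 : ℝ) / s) with hα
  have h4s : (4 : ℝ) ≤ (4 : ℝ) ^ s := by
    calc (4 : ℝ) = 4 ^ 1 := (pow_one 4).symm
    _ ≤ 4 ^ s := pow_le_pow_right₀ (by norm_num) hs
  have hβ1 : (1 : ℝ) ≤ β := by rw [hβ]; linarith
  have hβ0 : (0 : ℝ) ≤ β := by linarith
  have hα1 : (1 : ℝ) ≤ α := Real.one_le_rpow hβ1 (by positivity)
  have hαs : α ^ s = β := by
    rw [hα, ← Real.rpow_natCast (β ^ ((1:ℝ)/s)) s, ← Real.rpow_mul hβ0]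
    rw [one_div_mul_cancel (by exact_mod_cast hs.ne' : (s : ℝ) ≠ 0), Real.rpow_one]
  have hαr : α ^ r = β ^ m * α ^ t := by
    rw [hr, pow_add, mul_comm m s, pow_mul, hαs]
  have hcastN : ((N : ℕ) : ℝ) = β ^ m * 4 ^ t := by
    have h14 : (1 : ℕ) ≤ 4 ^ s := Nat.one_le_pow _ _ (by norm_num)
    rw [hN]
    push_cast [Nat.cast_sub h14]
    rw [hβ]
  have hkey : (N : ℝ) ≤ 4 ^ (s - 1) * α ^ r := by
    rw [hcastN, hαr]
    have h4t : (4 : ℝ) ^ t ≤ 4 ^ (s - 1) := pow_le_pow_right₀ (by norm_num) (by omega)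
    have hαt : (1 : ℝ) ≤ α ^ t := by
      calc (1:ℝ) = 1 ^ t := (one_pow t).symm
        _ ≤ α ^ t := pow_le_pow_left₀ (by norm_num) hα1 t
    have hβm : (0 : ℝ) ≤ β ^ m := by positivity
    calc β ^ m * 4 ^ t ≤ β ^ m * (4 ^ (s-1) * α ^ t) := by
          apply mul_le_mul_of_nonneg_left _ hβm
          calc (4:ℝ) ^ t = 4 ^ t * 1 := (mul_one _).symm
            _ ≤ 4 ^ (s-1) * α ^ t := mul_le_mul h4t hαt (by norm_num) (by positivity)
      _ = 4 ^ (s - 1) * (β ^ m * α ^ t) := by ring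
  calc (Nat.card {p : (Fin r → Fin 2) × (Fin r → Fin 2) // ¬ sGood r s p.1 p.2} : ℝ)
      ≤ ((s * (2 * N) : ℕ) : ℝ) := by exact_mod_cast hnat
    _ = 2 * s * (N : ℝ) := by push_cast; ring
    _ ≤ 2 * s * (4 ^ (s - 1) * α ^ r) := by
        apply mul_le_mul_of_nonneg_left hkey (by positivity)
    _ = 2 * s * 4 ^ (s - 1) * α ^ r := by ring
end

section
/- Let s be a fixed positive integer and let h with 1 ≤ h ≤ s be fixed. Call a pair (x, y) of binary vectors of length r '(s,h)-bad with respect to x' if there is no index i with 0 ≤ i ≤ r − s such that (x_i, …, x_{i+s−1}) = e_h and (y_i, …, y_{i+s−1}) = 0_s. Then the number of pairs (x, y) of binary vectors of length r that are (s,h)-bad with respect to x is at most 4^{s−1}·(4^s − 1)^{⌊r/s⌋}. -/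
/-- A pair `(x, y)` is `(s,h)`-bad with respect to `x` if there is no index `i` with
`0 ≤ i ≤ r - s` such that the window of `x` at `i` is `e_h` and the window of `y` at `i`
is the zero vector. -/
def shBadWrtFst (r s h : ℕ) (x y : Fin r → Fin 2) : Prop :=
  ¬ ∃ (i : ℕ) (hi : i + s ≤ r),
      window s x i hi = eVec s h ∧ window s y i hi = (fun _ => 0)

theorem number_of_sh_bad_pairs_le (s h r : ℕ) (hs : 0 < s) (hh1 : 1 ≤ h) (hhs : h ≤ s) :
    Nat.card {p : (Fin r → Fin 2) × (Fin r → Fin 2) // shBadWrtFst r s h p.1 p.2} ≤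
      4 ^ (s - 1) * (4 ^ s - 1) ^ (r / s) := by
  classical
  set q := r / s with hq
  set m := r % s with hm
  have hdm : q * s + m = r := by
    rw [hq, hm, Nat.mul_comm]; exact Nat.div_add_mod r s
  have hms : m < s := Nat.mod_lt r hs
  set bad : Fin s → Fin 2 × Fin 2 := fun t => (eVec s h t, 0) with hbad
  have hblock : ∀ j : ℕ, j < q → j * s + s ≤ r := by
    intro j hj
    have h1 : (j + 1) * s ≤ q * s := Nat.mul_le_mul_right s (by omega)
    rw [Nat.succ_mul] at h1
    omega
  have hrem : ∀ j : Fin m, q * s + (j : ℕ) < r := by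
    intro j; have := j.2; omega
  let f : {p : (Fin r → Fin 2) × (Fin r → Fin 2) // shBadWrtFst r s h p.1 p.2} →
      (Fin m → (Fin 2 × Fin 2)) × (Fin q → {v : Fin s → Fin 2 × Fin 2 // v ≠ bad}) :=
    fun p =>
      ( fun j => (p.1.1 ⟨q * s + j, hrem j⟩, p.1.2 ⟨q * s + j, hrem j⟩),
        fun j => ⟨fun t => (p.1.1 ⟨(j : ℕ) * s + t, by have := hblock j j.2; omega⟩,
                            p.1.2 ⟨(j : ℕ) * s + t, by have := hblock j j.2; omega⟩),
          by
            intro hv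
            apply p.2
            refine ⟨(j : ℕ) * s, hblock j j.2, ?_, ?_⟩
            · funext t
              have h0 := congrArg Prod.fst (congrFun hv t)
              simpa [window, bad] using h0
            · funext t
              have h0 := congrArg Prod.snd (congrFun hv t)
              simpa [window, bad] using h0⟩ )
  have hf : Function.Injective f := by
    rintro ⟨⟨x₁, y₁⟩, h₁⟩ ⟨⟨x₂, y₂⟩, h₂⟩ hfe
    have hfe1 := congrArg Prod.fst hfe
    have hfe2 := congrArg Prod.snd hfe
    simp only [f] at hfe1 hfe2
    have hxy : ∀ i : Fin r, x₁ i = x₂ i ∧ y₁ i = y₂ i := by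
      intro i
      rcases lt_or_ge ((i : ℕ) / s) q with hjq | hjq
      · -- block case
        have hts : (i : ℕ) % s < s := Nat.mod_lt _ hs
        have hidx : (i : ℕ) / s * s + (i : ℕ) % s = (i : ℕ) := by
          rw [Nat.mul_comm]; exact Nat.div_add_mod _ _
        have h0 := congrFun (congrArg Subtype.val (congrFun hfe2 ⟨(i : ℕ) / s, hjq⟩))
          ⟨(i : ℕ) % s, hts⟩
        simp only [Fin.val_mk] at h0
        have hA : (⟨(i : ℕ) / s * s + (i : ℕ) % s, by
            have := hblock ((i : ℕ) / s) hjq; omega⟩ : Fin r) = i := Fin.ext hidx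
        rw [hA] at h0
        exact ⟨congrArg Prod.fst h0, congrArg Prod.snd h0⟩
      · -- remainder case
        have hqs : (i : ℕ) / s = q := by
          have h1 : (i : ℕ) / s * s ≤ (i : ℕ) := Nat.div_mul_le_self _ _
          have h2 : q * s ≤ (i : ℕ) / s * s := Nat.mul_le_mul_right s hjq
          have h3 : (q + 1) * s ≤ (i : ℕ) / s * s ∨ (i : ℕ) / s = q := by
            rcases Nat.lt_or_ge q ((i : ℕ) / s) with hlt | hge
            · exact Or.inl (Nat.mul_le_mul_right s hlt)
            · exact Or.inr (le_antisymm hge hjq)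
          rcases h3 with h3 | h3
          · rw [Nat.succ_mul] at h3
            have := i.2
            omega
          · exact h3
        have hmod : (i : ℕ) % s < m := by
          have h1 : (i : ℕ) / s * s + (i : ℕ) % s = (i : ℕ) := by
            rw [Nat.mul_comm]; exact Nat.div_add_mod _ _
          rw [hqs] at h1
          have := i.2
          omega
        have h0 := congrFun hfe1 ⟨(i : ℕ) % s, hmod⟩
        have hA : (⟨q * s + (i : ℕ) % s, hrem ⟨(i : ℕ) % s, hmod⟩⟩ : Fin r) = i := by
          apply Fin.ext
          have h1 : (i : ℕ) / s * s + (i : ℕ) % s = (i : ℕ) := by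
            rw [Nat.mul_comm]; exact Nat.div_add_mod _ _
          rw [hqs] at h1
          exact h1
        rw [hA] at h0
        exact ⟨congrArg Prod.fst h0, congrArg Prod.snd h0⟩
    have hx : x₁ = x₂ := funext fun i => (hxy i).1
    have hy : y₁ = y₂ := funext fun i => (hxy i).2
    simp [hx, hy]
  have hcard := Nat.card_le_card_of_injective f hf
  have hsub : Fintype.card {v : Fin s → Fin 2 × Fin 2 // v ≠ bad} = 4 ^ s - 1 := by
    have h1 : Fintype.card {v : Fin s → Fin 2 × Fin 2 // v ≠ bad}
        = Fintype.card (Fin s → Fin 2 × Fin 2) - Fintype.card {v : Fin s → Fin 2 × Fin 2 // v = bad} := by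
      exact Fintype.card_subtype_compl _
    rw [h1, Fintype.card_subtype_eq]
    congr 1
    simp [Fintype.card_fun]
  have htarget : Nat.card ((Fin m → (Fin 2 × Fin 2)) ×
      (Fin q → {v : Fin s → Fin 2 × Fin 2 // v ≠ bad})) = 4 ^ m * (4 ^ s - 1) ^ q := by
    rw [Nat.card_eq_fintype_card, Fintype.card_prod, Fintype.card_fun, Fintype.card_fun, hsub]
    simp
  rw [htarget] at hcard
  calc Nat.card {p : (Fin r → Fin 2) × (Fin r → Fin 2) // shBadWrtFst r s h p.1 p.2}
      ≤ 4 ^ m * (4 ^ s - 1) ^ q := hcard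
    _ ≤ 4 ^ (s - 1) * (4 ^ s - 1) ^ q :=
        Nat.mul_le_mul_right _ (Nat.pow_le_pow_right (by norm_num) (by omega))
end

section
/- For any fixed positive integer s, the number f_s(r) of s-bad pairs of binary vectors of length r satisfies f_s(r)/4^r → 0 as r → ∞; equivalently, the proportion of pairs of binary vectors of length r that are s-bad tends to zero. -/
/-!
A bad pair `(x, y)`, read as a word `z i = (x i, y i)` over the four-letter alphabet `Fin 2 × Fin 2`,
avoids at every position one of the `2 s` patterns `(e_h, 0)`, `(0, e_h)`. Looking only at the
`⌊r / s⌋` disjoint blocks of length `s`, at most `(4 ^ s - 1) ^ ⌊r / s⌋ * 4 ^ (r mod s)` words avoid a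
given pattern, so the proportion of bad pairs is at most `2 s (1 - 4 ^ (-s)) ^ ⌊r / s⌋ → 0`.
-/

open Filter Topology Finset

variable {r s : ℕ}

def finBlocksEquiv (r s : ℕ) : Fin (r / s) × Fin s ⊕ Fin (r % s) ≃ Fin r :=
  (finProdFinEquiv.sumCongr (Equiv.refl _)).trans
    (finSumFinEquiv.trans (finCongr (Nat.div_add_mod' r s)))

@[simp]
lemma finBlocksEquiv_inl_val (k : Fin (r / s)) (t : Fin s) :
    (finBlocksEquiv r s (.inl (k, t)) : ℕ) = s * k + t := by
  simp [finBlocksEquiv, finProdFinEquiv, add_comm]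

section Avoidance

variable {α : Type*}

def Avoids (p : Fin s → α) (z : Fin r → α) : Prop :=
  ∀ i (hi : i + s ≤ r), (fun t : Fin s => z ⟨i + t, by omega⟩) ≠ p

lemma block_ne_of_avoids {p : Fin s → α} {z : Fin r → α} (hz : Avoids p z) (k : Fin (r / s)) :
    (fun t => z (finBlocksEquiv r s (.inl (k, t)))) ≠ p := by
  have hk : s * k + s ≤ r :=
    calc s * k + s = s * (k + 1) := by ring
      _ ≤ s * (r / s) := Nat.mul_le_mul_left s k.2
      _ ≤ r := Nat.mul_div_le r s
  convert hz (s * k) hk using 3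
  ext; simp

variable [Fintype α]

theorem card_avoids_le (p : Fin s → α) :
    Nat.card {z : Fin r → α // Avoids p z} ≤
      (Fintype.card α ^ s - 1) ^ (r / s) * Fintype.card α ^ (r % s) := by
  let blocks : {z : Fin r → α // Avoids p z} →
      (Fin (r / s) → {q : Fin s → α // q ≠ p}) × (Fin (r % s) → α) :=
    fun z => (fun k => ⟨_, block_ne_of_avoids z.2 k⟩, fun j => z.1 (finBlocksEquiv r s (.inr j)))
  have h_inj : Function.Injective blocks := by
    intro z w h
    ext1; funext i
    obtain ⟨u | j, rfl⟩ := (finBlocksEquiv r s).surjective i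
    · exact congrFun (congrArg Subtype.val (congrFun (congrArg Prod.fst h) u.1)) u.2
    · exact congrFun (congrArg Prod.snd h) j
  calc Nat.card {z : Fin r → α // Avoids p z}
      ≤ Nat.card ((Fin (r / s) → {q : Fin s → α // q ≠ p}) × (Fin (r % s) → α)) :=
        Nat.card_le_card_of_injective blocks h_inj
    _ = _ := by classical simp [Nat.card_eq_fintype_card, Fintype.card_subtype_compl]

lemma card_pairs_avoids_le {β : Type*} [Fintype β] (a : Fin s → α) (b : Fin s → β) :
    Nat.card {p : (Fin r → α) × (Fin r → β) //
        Avoids (fun t => (a t, b t)) fun i => (p.1 i, p.2 i)} ≤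
      (Fintype.card (α × β) ^ s - 1) ^ (r / s) * Fintype.card (α × β) ^ (r % s) :=
  (Nat.card_congr ((Equiv.arrowProdEquivProdArrow _ _ _).symm.subtypeEquiv fun _ => Iff.rfl)).trans_le
    (card_avoids_le _)

end Avoidance

lemma window_pair_eq_iff {x y : Fin r → Fin 2} {i : ℕ} (hi : i + s ≤ r) {a b : Fin s → Fin 2} :
    (fun t : Fin s => (x ⟨i + t, by omega⟩, y ⟨i + t, by omega⟩)) = (fun t => (a t, b t)) ↔
      window s x i hi = a ∧ window s y i hi = b := by
  simp only [funext_iff, Prod.ext_iff, forall_and, window]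

lemma exists_avoids_of_not_sGood {x y : Fin r → Fin 2} (hxy : ¬ sGood r s x y) :
    ∃ h ∈ Icc 1 s, Avoids (fun t => (eVec s h t, 0)) (fun i => (x i, y i)) ∨
      Avoids (fun t => (0, eVec s h t)) (fun i => (x i, y i)) := by
  contrapose! hxy
  simp only [Avoids, not_forall, not_not] at hxy
  intro h h1 h2
  obtain ⟨⟨i, hi, hxi⟩, ⟨j, hj, hyj⟩⟩ := hxy h (mem_Icc.2 ⟨h1, h2⟩)
  rw [window_pair_eq_iff hi] at hxi
  rw [window_pair_eq_iff hj] at hyj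
  exact ⟨i, j, hi, hj, hxi.1, hyj.1, hxi.2, hyj.2⟩

theorem card_not_sGood_le (r s : ℕ) :
    Nat.card {p : (Fin r → Fin 2) × (Fin r → Fin 2) // ¬ sGood r s p.1 p.2} ≤
      2 * s * ((4 ^ s - 1) ^ (r / s) * 4 ^ (r % s)) := by
  classical
  let avoiders (a b : Fin s → Fin 2) : Finset ((Fin r → Fin 2) × (Fin r → Fin 2)) :=
    {p | Avoids (fun t => (a t, b t)) fun i => (p.1 i, p.2 i)}
  have h_avoiders (a b) : #(avoiders a b) ≤ (4 ^ s - 1) ^ (r / s) * 4 ^ (r % s) := by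
    have := card_pairs_avoids_le (r := r) a b
    rwa [Fintype.card_prod, Fintype.card_fin, Nat.card_eq_fintype_card, Fintype.card_subtype] at this
  have h_sub : ({p | ¬ sGood r s p.1 p.2} : Finset ((Fin r → Fin 2) × (Fin r → Fin 2))) ⊆
      (Icc 1 s).biUnion fun h => avoiders (eVec s h) 0 ∪ avoiders 0 (eVec s h) := by
    intro p hp
    obtain ⟨h, hh, h_avoids⟩ := exists_avoids_of_not_sGood (mem_filter.1 hp).2
    exact mem_biUnion.2 ⟨h, hh, by simpa [avoiders] using h_avoids⟩
  calc Nat.card {p : (Fin r → Fin 2) × (Fin r → Fin 2) // ¬ sGood r s p.1 p.2}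
      = #({p | ¬ sGood r s p.1 p.2} : Finset ((Fin r → Fin 2) × (Fin r → Fin 2))) := by
        rw [Nat.card_eq_fintype_card, Fintype.card_subtype]
    _ ≤ ∑ h ∈ Icc 1 s, #(avoiders (eVec s h) 0 ∪ avoiders 0 (eVec s h)) :=
        (card_le_card h_sub).trans card_biUnion_le
    _ ≤ ∑ h ∈ Icc 1 s, 2 * ((4 ^ s - 1) ^ (r / s) * 4 ^ (r % s)) :=
        sum_le_sum fun h _ => (card_union_le _ _).trans (by
          rw [two_mul]; exact add_le_add (h_avoiders _ _) (h_avoiders _ _))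
    _ = 2 * s * ((4 ^ s - 1) ^ (r / s) * 4 ^ (r % s)) := by simp; ring

lemma tendsto_pow_sub_one_pow_mul_pow_mod_div_pow {x : ℝ} (hx : 1 ≤ x) (hs : 0 < s) :
    Tendsto (fun r : ℕ => (x ^ s - 1) ^ (r / s) * x ^ (r % s) / x ^ r) atTop (𝓝 0) := by
  have hxs : 1 ≤ x ^ s := one_le_pow₀ hx
  have h_eq (r : ℕ) : (x ^ s - 1) ^ (r / s) * x ^ (r % s) / x ^ r = (1 - 1 / x ^ s) ^ (r / s) := by
    have h_split : x ^ r = (x ^ s) ^ (r / s) * x ^ (r % s) := by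
      rw [← pow_mul, ← pow_add, Nat.div_add_mod]
    rw [h_split, mul_div_mul_right _ _ (by positivity), ← div_pow, sub_div, div_self (by positivity)]
  have h_nonneg : 0 ≤ 1 - 1 / x ^ s := by
    rw [sub_nonneg]; exact div_le_one_of_le₀ hxs (by positivity)
  have h_lt : 1 - 1 / x ^ s < 1 := by
    have : 0 < 1 / x ^ s := by positivity
    linarith
  refine Tendsto.congr (fun r => (h_eq r).symm) ?_
  exact (tendsto_pow_atTop_nhds_zero_of_lt_one h_nonneg h_lt).comp (Nat.tendsto_div_const_atTop hs.ne')

theorem proportion_of_s_bad_pairs_tendsto_zero (s : ℕ) (hs : 0 < s) :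
    Filter.Tendsto
      (fun r : ℕ =>
        (Nat.card {p : (Fin r → Fin 2) × (Fin r → Fin 2) // ¬ sGood r s p.1 p.2} : ℝ) / 4 ^ r)
      Filter.atTop (nhds 0) := by
  have h_bound (r : ℕ) :
      (Nat.card {p : (Fin r → Fin 2) × (Fin r → Fin 2) // ¬ sGood r s p.1 p.2} : ℝ) / 4 ^ r ≤
        2 * s * (((4 : ℝ) ^ s - 1) ^ (r / s) * 4 ^ (r % s) / 4 ^ r) := by
    rw [← mul_div_assoc]
    gcongr
    have h_cast : ((2 * s * ((4 ^ s - 1) ^ (r / s) * 4 ^ (r % s)) : ℕ) : ℝ) =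
        2 * s * (((4 : ℝ) ^ s - 1) ^ (r / s) * 4 ^ (r % s)) := by
      push_cast [Nat.one_le_pow s 4 (by norm_num)]
      rfl
    exact h_cast ▸ Nat.cast_le.2 (card_not_sGood_le r s)
  have h_lim :=
    (tendsto_pow_sub_one_pow_mul_pow_mod_div_pow (x := 4) (by norm_num) hs).const_mul (2 * s : ℝ)
  rw [mul_zero] at h_lim
  exact squeeze_zero (fun r => by positivity) h_bound h_lim
end
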